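/- Let L > 0, let n be a natural number, and let 0 < a < L/2. Then there exist constants C > 0 and δ₀ > 0 such that for all δ ∈ (0, δ₀) and all x ∈ [−a, a], one has |A_δ[y ↦ yⁿ](x) − xⁿ/2| ≤ C·δ. -/

import Mathlib

/-! Write `yⁿ = xⁿ + n xⁿ⁻¹ (y - x) + R(y)` with `|R(y)| ≤ B (y - x)²` and integrate against
the kernel term by term. The kernel itself integrates to a sum of two arctangents, which falls
short of `π / 2` by `O(δ / ε)` when `x` is at distance `ε` from both endpoints; its first moment
integrates to `δ / 2` times a difference of logarithms, which is `O(δ)`; and since the kernel times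
`(y - x)²` is at most `δ`, the remainder contributes at most `δ B L`. -/

open MeasureTheory Real Set intervalIntegral

lemma arctan_le_self {t : ℝ} (ht : 0 ≤ t) : arctan t ≤ t := by
  simpa only [tan_arctan] using le_tan (arctan_nonneg.2 ht) (arctan_lt_pi_div_two t)

lemma pi_div_two_sub_arctan_le_inv {t : ℝ} (ht : 0 < t) : π / 2 - arctan t ≤ t⁻¹ := by
  rw [← arctan_inv_of_pos ht]
  exact arctan_le_self (inv_nonneg.2 ht.le)

lemma abs_log_sub_log_le {A B c : ℝ} (hc : 0 < c) (hA : c ≤ A) (hB : c ≤ B) :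
    |log A - log B| ≤ |A - B| / c := by
  have key : ∀ {A B : ℝ}, c ≤ A → c ≤ B → log A - log B ≤ |A - B| / c := by
    intro A B hA hB
    have hB0 : 0 < B := hc.trans_le hB
    calc log A - log B = log (A / B) := (log_div (hc.trans_le hA).ne' hB0.ne').symm
      _ ≤ A / B - 1 := log_le_sub_one_of_pos (div_pos (hc.trans_le hA) hB0)
      _ = (A - B) / B := by field_simp
      _ ≤ |A - B| / B := by gcongr; exact le_abs_self _
      _ ≤ |A - B| / c := by gcongr
  rw [abs_sub_le_iff]
  exact ⟨key hA hB, abs_sub_comm A B ▸ key hB hA⟩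

lemma abs_pow_sub_pow_sub_mul_le {P x y : ℝ} (hP : 1 ≤ P) (hx : |x| ≤ P) (hy : |y| ≤ P) (n : ℕ) :
    |y ^ n - x ^ n - n * x ^ (n - 1) * (y - x)| ≤ n ^ 2 * P ^ n * (y - x) ^ 2 := by
  induction n with
  | zero => simp
  | succ m ih =>
    have hrec : y ^ (m + 1) - x ^ (m + 1) - ↑(m + 1) * x ^ (m + 1 - 1) * (y - x)
        = y * (y ^ m - x ^ m - m * x ^ (m - 1) * (y - x)) + m * x ^ (m - 1) * (y - x) ^ 2 := by
      cases m <;> simp only [Nat.add_sub_cancel] <;> push_cast <;> ring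
    have hxm : |x ^ (m - 1)| ≤ P ^ (m + 1) := by
      rw [abs_pow]
      exact (pow_le_pow_left₀ (abs_nonneg x) hx _).trans (pow_le_pow_right₀ hP (by omega))
    rw [hrec]
    calc _ ≤ |y * (y ^ m - x ^ m - m * x ^ (m - 1) * (y - x))| + |m * x ^ (m - 1) * (y - x) ^ 2| :=
          abs_add_le _ _
      _ = |y| * |y ^ m - x ^ m - m * x ^ (m - 1) * (y - x)| + m * |x ^ (m - 1)| * (y - x) ^ 2 := by
          rw [abs_mul, abs_mul, abs_mul, Nat.abs_cast, abs_of_nonneg (sq_nonneg (y - x))]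
      _ ≤ P * (m ^ 2 * P ^ m * (y - x) ^ 2) + m * P ^ (m + 1) * (y - x) ^ 2 := by gcongr
      _ = (m ^ 2 + m) * P ^ (m + 1) * (y - x) ^ 2 := by ring
      _ ≤ ↑(m + 1) ^ 2 * P ^ (m + 1) * (y - x) ^ 2 := by push_cast; gcongr; nlinarith

/-- `π⁻¹ • adeltaKernel δ x` is half the Poisson kernel of the half-plane at height `2 δ`. -/
noncomputable def adeltaKernel (δ x y : ℝ) : ℝ := δ / ((x - y) ^ 2 + 4 * δ ^ 2)

section adeltaKernel

variable {δ : ℝ}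

lemma adeltaKernel_denom_pos (hδ : δ ≠ 0) (x y : ℝ) : 0 < (x - y) ^ 2 + 4 * δ ^ 2 := by
  positivity

lemma continuous_adeltaKernel (hδ : δ ≠ 0) (x : ℝ) : Continuous (adeltaKernel δ x) :=
  continuous_const.div (by fun_prop) fun y => (adeltaKernel_denom_pos hδ x y).ne'

lemma adeltaKernel_mul_sq_le (hδ : 0 < δ) (x y : ℝ) : adeltaKernel δ x y * (y - x) ^ 2 ≤ δ := by
  have hD := adeltaKernel_denom_pos hδ.ne' x y
  rw [adeltaKernel, div_mul_eq_mul_div, div_le_iff₀ hD]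
  nlinarith [sq_nonneg δ]

lemma integral_adeltaKernel (hδ : δ ≠ 0) (M x : ℝ) :
    ∫ y in (-M)..M, adeltaKernel δ x y
      = (arctan ((M - x) / (2 * δ)) + arctan ((M + x) / (2 * δ))) / 2 := by
  have hderiv (y : ℝ) :
      HasDerivAt (fun y => arctan ((y - x) / (2 * δ)) / 2) (adeltaKernel δ x y) y := by
    have h := ((((hasDerivAt_id y).sub_const x).div_const (2 * δ)).arctan).div_const 2
    refine h.congr_deriv ?_
    have := adeltaKernel_denom_pos hδ x y
    simp only [adeltaKernel, id]
    field_simp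
    ring
  rw [integral_eq_sub_of_hasDerivAt (fun y _ => hderiv y)
    ((continuous_adeltaKernel hδ x).intervalIntegrable _ _), show -M - x = -(M + x) by ring,
    neg_div, arctan_neg]
  ring

lemma integral_adeltaKernel_mul_sub (hδ : δ ≠ 0) (M x : ℝ) :
    ∫ y in (-M)..M, adeltaKernel δ x y * (y - x)
      = δ / 2 * (log ((M - x) ^ 2 + 4 * δ ^ 2) - log ((M + x) ^ 2 + 4 * δ ^ 2)) := by
  have hderiv (y : ℝ) : HasDerivAt (fun y => δ / 2 * log ((y - x) ^ 2 + 4 * δ ^ 2))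
      (adeltaKernel δ x y * (y - x)) y := by
    have hD : (y - x) ^ 2 + 4 * δ ^ 2 ≠ 0 := by positivity
    have hD' : HasDerivAt (fun y => (y - x) ^ 2 + 4 * δ ^ 2) (2 * (y - x)) y := by
      simpa using (((hasDerivAt_id y).sub_const x).pow 2).add_const (4 * δ ^ 2)
    refine ((hD'.log hD).const_mul (δ / 2)).congr_deriv ?_
    rw [adeltaKernel, show (x - y) ^ 2 = (y - x) ^ 2 by ring]
    field_simp
  rw [integral_eq_sub_of_hasDerivAt (fun y _ => hderiv y)
    (((continuous_adeltaKernel hδ x).mul (by fun_prop)).intervalIntegrable _ _)]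
  ring_nf

variable {M ε x : ℝ}

lemma abs_integral_adeltaKernel_sub_pi_div_two_le (hε : 0 < ε) (hδ : 0 < δ) (hx : |x| ≤ M - ε) :
    |(∫ y in (-M)..M, adeltaKernel δ x y) - π / 2| ≤ 2 * δ / ε := by
  have hinv {t : ℝ} (ht : ε ≤ t) : π / 2 - arctan (t / (2 * δ)) ≤ 2 * δ / ε := by
    calc π / 2 - arctan (t / (2 * δ)) ≤ (t / (2 * δ))⁻¹ :=
          pi_div_two_sub_arctan_le_inv (div_pos (hε.trans_le ht) (by positivity))
      _ ≤ 2 * δ / ε := by rw [inv_div]; gcongr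
  have h₁ := hinv (t := M - x) (by linarith [le_abs_self x])
  have h₂ := hinv (t := M + x) (by linarith [neg_abs_le x])
  have h₃ := arctan_lt_pi_div_two ((M - x) / (2 * δ))
  have h₄ := arctan_lt_pi_div_two ((M + x) / (2 * δ))
  rw [integral_adeltaKernel hδ.ne', abs_le]
  constructor <;> linarith

lemma abs_integral_adeltaKernel_mul_sub_le (hε : 0 < ε) (hδ : 0 < δ) (hx : |x| ≤ M - ε) :
    |∫ y in (-M)..M, adeltaKernel δ x y * (y - x)| ≤ 2 * δ * M * |x| / ε ^ 2 := by
  have hM : 0 ≤ M := by linarith [abs_nonneg x]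
  have hsq {t : ℝ} (ht : ε ≤ t) : ε ^ 2 ≤ t ^ 2 + 4 * δ ^ 2 := by nlinarith
  have hlog := abs_log_sub_log_le (by positivity) (hsq (t := M - x) (by linarith [le_abs_self x]))
    (hsq (t := M + x) (by linarith [neg_abs_le x]))
  rw [integral_adeltaKernel_mul_sub hδ.ne', abs_mul, abs_of_pos (by positivity)]
  calc δ / 2 * |log ((M - x) ^ 2 + 4 * δ ^ 2) - log ((M + x) ^ 2 + 4 * δ ^ 2)|
      ≤ δ / 2 * (|(M - x) ^ 2 + 4 * δ ^ 2 - ((M + x) ^ 2 + 4 * δ ^ 2)| / ε ^ 2) := by gcongr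
    _ = 2 * δ * M * |x| / ε ^ 2 := by
      rw [show (M - x) ^ 2 + 4 * δ ^ 2 - ((M + x) ^ 2 + 4 * δ ^ 2) = -4 * M * x by ring, abs_mul,
        abs_mul, abs_of_nonneg hM]
      norm_num
      ring

lemma abs_integral_adeltaKernel_mul_le {g : ℝ → ℝ} {a b B : ℝ} (hδ : 0 < δ) (hB : 0 ≤ B)
    (hg : ∀ y ∈ uIcc a b, |g y| ≤ B * (y - x) ^ 2) :
    |∫ y in a..b, adeltaKernel δ x y * g y| ≤ δ * B * |b - a| := by
  rw [← Real.norm_eq_abs]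
  refine intervalIntegral.norm_integral_le_of_norm_le_const fun y hy => ?_
  have hK : 0 ≤ adeltaKernel δ x y := div_nonneg hδ.le (adeltaKernel_denom_pos hδ.ne' x y).le
  calc ‖adeltaKernel δ x y * g y‖ = adeltaKernel δ x y * |g y| := by
        rw [Real.norm_eq_abs, abs_mul, abs_of_nonneg hK]
    _ ≤ adeltaKernel δ x y * (B * (y - x) ^ 2) := by gcongr; exact hg y (uIoc_subset_uIcc hy)
    _ = B * (adeltaKernel δ x y * (y - x) ^ 2) := by ring
    _ ≤ B * δ := by gcongr; exact adeltaKernel_mul_sq_le hδ x y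
    _ = δ * B := mul_comm B δ

end adeltaKernel

theorem abs_integral_adeltaKernel_mul_sub_pi_div_two_mul_le {f : ℝ → ℝ} {M ε δ x f₁ B : ℝ}
    (hε : 0 < ε) (hδ : 0 < δ) (hx : |x| ≤ M - ε) (hf : IntervalIntegrable f volume (-M) M)
    (hB : 0 ≤ B) (htaylor : ∀ y ∈ Icc (-M) M, |f y - f x - f₁ * (y - x)| ≤ B * (y - x) ^ 2) :
    |(∫ y in (-M)..M, adeltaKernel δ x y * f y) - π / 2 * f x|
      ≤ δ * (2 * |f x| / ε + 2 * M * |x| * |f₁| / ε ^ 2 + 2 * M * B) := by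
  have hM : 0 ≤ M := by linarith [abs_nonneg x]
  have hK := continuous_adeltaKernel hδ.ne' x
  have hsplit : (∫ y in (-M)..M, adeltaKernel δ x y * f y) - π / 2 * f x
      = f x * ((∫ y in (-M)..M, adeltaKernel δ x y) - π / 2)
        + f₁ * (∫ y in (-M)..M, adeltaKernel δ x y * (y - x))
        + ∫ y in (-M)..M, adeltaKernel δ x y * (f y - f x - f₁ * (y - x)) := by
    have hK₁ : IntervalIntegrable (fun y => adeltaKernel δ x y * (y - x)) volume (-M) M :=
      (hK.mul (by fun_prop)).intervalIntegrable _ _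
    have hKf := hf.continuousOn_mul hK.continuousOn
    have hK₀ := (hK.intervalIntegrable (μ := volume) (-M) M).const_mul (f x)
    have hR : (fun y => adeltaKernel δ x y * (f y - f x - f₁ * (y - x)))
        = fun y => adeltaKernel δ x y * f y - f x * adeltaKernel δ x y
          - f₁ * (adeltaKernel δ x y * (y - x)) := by
      funext y; ring
    rw [hR, integral_sub (hKf.sub hK₀) (hK₁.const_mul f₁), integral_sub hKf hK₀,
      intervalIntegral.integral_const_mul, intervalIntegral.integral_const_mul]
    ring
  have hrem :
      |∫ y in (-M)..M, adeltaKernel δ x y * (f y - f x - f₁ * (y - x))| ≤ δ * B * (2 * M) := by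
    have h := abs_integral_adeltaKernel_mul_le (a := -M) (b := M) hδ hB
      fun y hy => htaylor y (by rwa [uIcc_of_le (by linarith)] at hy)
    rwa [show |M - -M| = 2 * M by rw [abs_of_nonneg (by linarith)]; ring] at h
  rw [hsplit]
  calc _ ≤ |f x| * |(∫ y in (-M)..M, adeltaKernel δ x y) - π / 2|
        + |f₁| * |∫ y in (-M)..M, adeltaKernel δ x y * (y - x)|
        + |∫ y in (-M)..M, adeltaKernel δ x y * (f y - f x - f₁ * (y - x))| := by
        rw [← abs_mul, ← abs_mul]
        exact abs_add_three _ _ _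
    _ ≤ |f x| * (2 * δ / ε) + |f₁| * (2 * δ * M * |x| / ε ^ 2) + δ * B * (2 * M) := by
        gcongr
        · exact abs_integral_adeltaKernel_sub_pi_div_two_le hε hδ hx
        · exact abs_integral_adeltaKernel_mul_sub_le hε hδ hx
    _ = δ * (2 * |f x| / ε + 2 * M * |x| * |f₁| / ε ^ 2 + 2 * M * B) := by ring

theorem adelta_pow_interior_rate_general (L : ℝ) (n : ℕ) (a : ℝ)
    (haL : a < L/2) :
    ∃ C > (0:ℝ), ∃ δ₀ > (0:ℝ), ∀ δ ∈ Set.Ioo (0:ℝ) δ₀, ∀ x ∈ Set.Icc (-a) a,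
      |(1/Real.pi) * (∫ y in (-(L/2))..(L/2), δ/((x - y)^2 + 4*δ^2) * y^n) - x^n/2|
        ≤ C * δ := by
  set M := L / 2
  set ε := M - a
  set P := max M 1
  have hε : 0 < ε := sub_pos.2 haL
  have hP : 1 ≤ P := le_max_right M 1
  have hMP : M ≤ P := le_max_left M 1
  refine ⟨2 * P ^ n / ε + 2 * P * P * (n * P ^ n) / ε ^ 2 + 2 * P * (n ^ 2 * P ^ n), by positivity,
    1, one_pos, fun δ ⟨hδ, _⟩ x hx => ?_⟩
  have hxM : |x| ≤ M - ε := by simp only [ε, sub_sub_cancel]; exact abs_le.2 hx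
  have hxP : |x| ≤ P := by linarith
  have hxn : |x ^ n| ≤ P ^ n := by rw [abs_pow]; gcongr
  have hxn₁ : |n * x ^ (n - 1)| ≤ n * P ^ n := by
    rw [abs_mul, Nat.abs_cast, abs_pow]
    gcongr
    exact (pow_le_pow_left₀ (abs_nonneg x) hxP _).trans (pow_le_pow_right₀ hP (Nat.sub_le n 1))
  have key := abs_integral_adeltaKernel_mul_sub_pi_div_two_mul_le (f := fun y => y ^ n)
    (f₁ := n * x ^ (n - 1)) hε hδ hxM ((continuous_pow n).intervalIntegrable _ _) (by positivity)
    fun y hy => abs_pow_sub_pow_sub_mul_le hP hxP (abs_le.2 ⟨by linarith [hy.1], hy.2.trans hMP⟩) n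
  have hnormalize : 1 / π * (∫ y in (-M)..M, adeltaKernel δ x y * y ^ n) - x ^ n / 2
      = ((∫ y in (-M)..M, adeltaKernel δ x y * y ^ n) - π / 2 * x ^ n) / π := by
    field_simp
  show |1 / π * (∫ y in (-M)..M, adeltaKernel δ x y * y ^ n) - x ^ n / 2| ≤ _
  rw [hnormalize, abs_div, abs_of_pos pi_pos]
  calc _ ≤ |(∫ y in (-M)..M, adeltaKernel δ x y * y ^ n) - π / 2 * x ^ n| :=
        div_le_self (abs_nonneg _) (by linarith [pi_gt_three])
    _ ≤ _ := key
    _ ≤ _ := by rw [mul_comm]; gcongr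

/-- For `L > 0`, `n : ℕ` and `0 < a < L/2`, there are `C > 0` and `δ₀ > 0` such that for all
`δ ∈ (0, δ₀)` and all `x ∈ [−a, a]`, `|A_δ[y ↦ yⁿ](x) − xⁿ/2| ≤ C·δ`. -/
theorem adelta_pow_interior_rate (L : ℝ) (hL : 0 < L) (n : ℕ) (a : ℝ)
    (ha : 0 < a) (haL : a < L/2) :
    ∃ C > (0:ℝ), ∃ δ₀ > (0:ℝ), ∀ δ ∈ Set.Ioo (0:ℝ) δ₀, ∀ x ∈ Set.Icc (-a) a,
      |(1/Real.pi) * (∫ y in (-(L/2))..(L/2), δ/((x - y)^2 + 4*δ^2) * y^n) - x^n/2|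
        ≤ C * δ :=
  adelta_pow_interior_rate_general L n a haL
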